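/- arXiv:1609.00410 — 8 statements merged into one kernel-verified Lean document; each statement's English description precedes it below -/
import Mathlib

section
/- Let p be an odd prime and n ≥ 1. Let G ≤ GL₂(ℤ/pⁿℤ) be a p-group whose elements all fix the vector (1,0), i.e., are upper triangular of the form [[1,f],[0,1+s·p^k]] with k ≥ 1. Suppose G is generated by δ = [[1,0],[0,1+p^i]] and σ = [[1,p^e],[0,1]] for some i,e. Then H¹_loc(G,(ℤ/pⁿℤ)²) = 0. -/
/-!
A cocycle is determined by its values on generators, and on the generators `δ` and `σ` the local
conditions say `Z δ = δ a - a`, `Z σ = σ b - b`, `Z (σδ) = σδ c - c` for some vectors `a, b, c`.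
Comparing the local condition at `σδ` with the cocycle relation `Z (σδ) = Z σ + σ Z δ` shows that
the single vector `(0, c₂)` works for `δ` and for `σ` simultaneously, hence for the whole group.
-/

open Matrix

theorem Representation.cocycle_eq_coboundary_of_closure_eq_top {k G V : Type*} [CommSemiring k]
    [Group G] [AddCommGroup V] [Module k V] (ρ : Representation k G V) {Z : G → V}
    (hZ : ∀ g h, Z (g * h) = Z g + ρ g (Z h)) {S : Set G} (hS : Subgroup.closure S = ⊤) {v : V}
    (hv : ∀ g ∈ S, Z g = ρ g v - v) (g : G) : Z g = ρ g v - v := by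
  have hZ_one : Z 1 = 0 := by simpa using hZ 1 1
  let H : Subgroup G :=
    { carrier := {g | Z g = ρ g v - v}
      one_mem' := by simp [hZ_one]
      mul_mem' := fun {g h} (hg : Z g = _) (hh : Z h = _) => by
        show Z (g * h) = _
        rw [hZ, hg, hh, map_sub, map_mul, Module.End.mul_apply]
        abel
      inv_mem' := fun {g} (hg : Z g = _) => by
        show Z g⁻¹ = _
        have h := hZ g⁻¹ g
        rw [inv_mul_cancel, hZ_one, hg, map_sub, ← Module.End.mul_apply, ← map_mul,
          inv_mul_cancel, map_one, Module.End.one_apply] at h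
        linear_combination (norm := module) -h }
  have hH : H = ⊤ := top_le_iff.mp (hS ▸ (Subgroup.closure_le H).mpr hv)
  exact (hH ▸ Subgroup.mem_top g : g ∈ H)

theorem exists_common_coboundary_diag_unipotent {R : Type*} [CommRing R] (t u : R)
    {a b c : Fin 2 → R}
    (h : (!![1, t; 0, 1] *ᵥ b - b) + !![1, t; 0, 1] *ᵥ (!![1, 0; 0, 1 + u] *ᵥ a - a) =
      (!![1, t; 0, 1] * !![1, 0; 0, 1 + u]) *ᵥ c - c) :
    ∃ v : Fin 2 → R, !![1, 0; 0, 1 + u] *ᵥ v - v = !![1, 0; 0, 1 + u] *ᵥ a - a ∧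
      !![1, t; 0, 1] *ᵥ v - v = !![1, t; 0, 1] *ᵥ b - b := by
  have h₀ := congrFun h 0
  have h₁ := congrFun h 1
  simp only [mul_fin_two, mulVec, dotProduct, Fin.sum_univ_two, Pi.add_apply, Pi.sub_apply,
    of_apply, cons_val_zero, cons_val_one, cons_val_fin_one] at h₀ h₁
  refine ⟨![0, c 1], ?_, ?_⟩ <;> ext j <;> fin_cases j <;>
    simp only [mulVec, dotProduct, Fin.sum_univ_two, Pi.sub_apply, of_apply, cons_val_zero,
      cons_val_one, cons_val_fin_one, Fin.zero_eta, Fin.mk_one]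
  · ring
  · linear_combination -h₁
  · linear_combination t * h₁ - h₀
  · ring

theorem statement6_general (p : ℕ) (n : ℕ)
    (i e : ℕ)
    (d s : GL (Fin 2) (ZMod (p ^ n)))
    (hd : (d : Matrix (Fin 2) (Fin 2) (ZMod (p ^ n))) = !![1, 0; 0, 1 + (p : ZMod (p ^ n)) ^ i])
    (hs : (s : Matrix (Fin 2) (Fin 2) (ZMod (p ^ n))) = !![1, (p : ZMod (p ^ n)) ^ e; 0, 1])
    (G : Subgroup (GL (Fin 2) (ZMod (p ^ n))))
    (hG : G = Subgroup.closure {d, s})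
    (Z : G → Fin 2 → ZMod (p ^ n))
    (hZ : ∀ g h : G, Z (g * h) = Z g +
      ((g : GL (Fin 2) (ZMod (p ^ n))) : Matrix (Fin 2) (Fin 2) (ZMod (p ^ n))) *ᵥ Z h)
    (hloc : ∀ g : G, ∃ v : Fin 2 → ZMod (p ^ n),
      Z g = ((g : GL (Fin 2) (ZMod (p ^ n))) : Matrix (Fin 2) (Fin 2) (ZMod (p ^ n))) *ᵥ v - v) :
    ∃ v : Fin 2 → ZMod (p ^ n), ∀ g : G,
      Z g = ((g : GL (Fin 2) (ZMod (p ^ n))) : Matrix (Fin 2) (Fin 2) (ZMod (p ^ n))) *ᵥ v - v := by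
  subst hG
  let D : Subgroup.closure {d, s} := ⟨d, Subgroup.subset_closure (by simp)⟩
  let S : Subgroup.closure {d, s} := ⟨s, Subgroup.subset_closure (by simp)⟩
  obtain ⟨a, ha⟩ := hloc D
  obtain ⟨b, hb⟩ := hloc S
  obtain ⟨c, hc⟩ := hloc (S * D)
  have hSD : (s : Matrix (Fin 2) (Fin 2) (ZMod (p ^ n))) *ᵥ b - b + s *ᵥ (d *ᵥ a - a) =
      (s * d : Matrix (Fin 2) (Fin 2) (ZMod (p ^ n))) *ᵥ c - c := by
    rw [← ha, ← hb]
    exact (hZ S D).symm.trans hc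
  rw [hd, hs] at hSD
  obtain ⟨v, hvD, hvS⟩ := exists_common_coboundary_diag_unipotent _ _ hSD
  let ρ : Representation (ZMod (p ^ n)) (Subgroup.closure {d, s}) (Fin 2 → ZMod (p ^ n)) :=
    Matrix.toLinAlgEquiv'.toMonoidHom.comp ((Units.coeHom _).comp (Subgroup.subtype _))
  refine ⟨v, ρ.cocycle_eq_coboundary_of_closure_eq_top hZ Subgroup.closure_closure_coe_preimage ?_⟩
  rintro g (hg | hg : g.1 = d ∨ g.1 = s)
  · obtain rfl : g = D := Subtype.ext hg
    exact ha.trans (hd ▸ hvD).symm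
  · obtain rfl : g = S := Subtype.ext hg
    exact hb.trans (hs ▸ hvS).symm

/-- Let `p` be an odd prime, `n ≥ 1`, and let `G ≤ GL₂(ℤ/pⁿℤ)` be a
`p`-group generated by `δ = [[1,0],[0,1+p^i]]` and `σ = [[1,p^e],[0,1]]` (all of whose
elements therefore fix `(1,0)`).  Then `H¹_loc(G,(ℤ/pⁿℤ)²) = 0`: every cocycle on `G`
satisfying the local conditions is a coboundary. -/
theorem statement6 (p : ℕ) (hp : p.Prime) (hodd : Odd p) (n : ℕ) (hn : 1 ≤ n)
    (i e : ℕ) (hi : 1 ≤ i) (he : 1 ≤ e)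
    (d s : GL (Fin 2) (ZMod (p ^ n)))
    (hd : (d : Matrix (Fin 2) (Fin 2) (ZMod (p ^ n))) = !![1, 0; 0, 1 + (p : ZMod (p ^ n)) ^ i])
    (hs : (s : Matrix (Fin 2) (Fin 2) (ZMod (p ^ n))) = !![1, (p : ZMod (p ^ n)) ^ e; 0, 1])
    (G : Subgroup (GL (Fin 2) (ZMod (p ^ n))))
    (hG : G = Subgroup.closure {d, s})
    (hpG : IsPGroup p G)
    (hfix : ∀ g ∈ G, (g : Matrix (Fin 2) (Fin 2) (ZMod (p ^ n))) *ᵥ ![1, 0] = ![1, 0])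
    (Z : G → Fin 2 → ZMod (p ^ n))
    (hZ : ∀ g h : G, Z (g * h) = Z g +
      ((g : GL (Fin 2) (ZMod (p ^ n))) : Matrix (Fin 2) (Fin 2) (ZMod (p ^ n))) *ᵥ Z h)
    (hloc : ∀ g : G, ∃ v : Fin 2 → ZMod (p ^ n),
      Z g = ((g : GL (Fin 2) (ZMod (p ^ n))) : Matrix (Fin 2) (Fin 2) (ZMod (p ^ n))) *ᵥ v - v) :
    ∃ v : Fin 2 → ZMod (p ^ n), ∀ g : G,
      Z g = ((g : GL (Fin 2) (ZMod (p ^ n))) : Matrix (Fin 2) (Fin 2) (ZMod (p ^ n))) *ᵥ v - v :=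
  statement6_general p n i e d s hd hs G hG Z hZ hloc
end

section
/- Let p be an odd prime, n ≥ 1, l < e positive integers, m ∈ (ℤ/pⁿℤ)*, i ≥ 1, and let δ = [[1, p^l·m],[0, 1+p^i]] ∈ GL₂(ℤ/pⁿℤ). Then δ^(p^{e−l}) has the form [[1, p^e·m'],[0, (1+p^i)^{p^{e−l}}]] for some m' ∈ (ℤ/pⁿℤ)*. -/
/-!
The matrix `δ` is upper triangular with `1` in the corner, so the `(1,2)`-entry of `δ ^ k` is
`pˡ m (1 + x + ⋯ + x^(k-1))` with `x = 1 + pⁱ`. Since `p ∣ x - 1` and `p` is odd, lifting the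
exponent applied to `(x - 1)(1 + x + ⋯ + x^(k-1)) = x^k - 1` shows that the geometric sum has
`p`-adic valuation `v_p(k)`; for `k = p^(e-l)` it is therefore `p^(e-l)` times a unit.
-/

theorem Matrix.one_upper_fin_two_pow {R : Type*} [CommRing R] (a b : R) (k : ℕ) :
    !![1, a; 0, b] ^ k = !![1, a * ∑ j ∈ Finset.range k, b ^ j; 0, b ^ k] := by
  induction k with
  | zero => simp [Matrix.one_fin_two]
  | succ k ih =>
    rw [pow_succ', ih, Matrix.mul_fin_two, geom_sum_succ']
    ext i j
    fin_cases i <;> fin_cases j <;> simp <;> ring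

theorem Int.emultiplicity_geom_sum {p : ℕ} (hp : p.Prime) (hodd : Odd p) {x : ℤ} (hx : x ≠ 1)
    (hpx : (p : ℤ) ∣ x - 1) (n : ℕ) :
    emultiplicity (p : ℤ) (∑ j ∈ Finset.range n, x ^ j) = emultiplicity p n := by
  have hpZ : Prime (p : ℤ) := Nat.prime_iff_prime_int.mp hp
  have hp_not_dvd_x : ¬ (p : ℤ) ∣ x := fun h =>
    hpZ.not_dvd_one ((dvd_sub_right h).mp hpx)
  have h_finite : emultiplicity (p : ℤ) (x - 1) ≠ ⊤ :=
    finiteMultiplicity_iff_emultiplicity_ne_top.mp <|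
      Int.finiteMultiplicity_iff.mpr ⟨by simpa using hp.ne_one, sub_ne_zero.mpr hx⟩
  have hlte := Int.emultiplicity_pow_sub_pow hp hodd (y := 1) (by simpa using hpx)
    hp_not_dvd_x n
  rw [one_pow, ← geom_sum_mul, emultiplicity_mul hpZ, add_comm (emultiplicity _ (x - 1))] at hlte
  exact WithTop.add_right_cancel h_finite hlte

theorem ZMod.exists_unit_geom_sum_one_add_prime_pow_eq {p : ℕ} (hp : p.Prime) (hodd : Odd p)
    (n : ℕ) {i : ℕ} (hi : 1 ≤ i) (t : ℕ) :
    ∃ v : (ZMod (p ^ n))ˣ,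
      ∑ j ∈ Finset.range (p ^ t), (1 + (p : ZMod (p ^ n)) ^ i) ^ j =
        (p : ZMod (p ^ n)) ^ t * v := by
  have hpZ : Prime (p : ℤ) := Nat.prime_iff_prime_int.mp hp
  have hval : emultiplicity (p : ℤ) (∑ j ∈ Finset.range (p ^ t), (1 + (p : ℤ) ^ i) ^ j) = t := by
    have hpi : (p : ℤ) ^ i ≠ 0 := pow_ne_zero i (by exact_mod_cast hp.ne_zero)
    rw [Int.emultiplicity_geom_sum hp hodd (by simpa using hpi)
      (by simpa using dvd_pow_self (p : ℤ) (by omega : i ≠ 0)),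
      emultiplicity_pow_self_of_prime hp.prime]
  obtain ⟨⟨u, hu⟩, h_not_dvd⟩ := emultiplicity_eq_coe.mp hval
  have hpu : ¬ (p : ℤ) ∣ u := fun ⟨w, hw⟩ => h_not_dvd ⟨w, by rw [hu, hw, pow_succ]; ring⟩
  have hcop : IsCoprime u ((p ^ n : ℕ) : ℤ) := by
    rw [Nat.cast_pow]
    exact ((hpZ.coprime_iff_not_dvd).mpr hpu).symm.pow_right
  refine ⟨ZMod.unitOfIsCoprime u hcop, ?_⟩
  simpa using congrArg (Int.cast : ℤ → ZMod (p ^ n)) hu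

theorem statement8_general (p : ℕ) (hp : p.Prime) (hodd : Odd p) (n : ℕ)
    (l e i : ℕ) (hle : l < e) (hi : 1 ≤ i)
    (m : (ZMod (p ^ n))ˣ)
    (δ : Matrix (Fin 2) (Fin 2) (ZMod (p ^ n)))
    (hδ : δ = !![1, (p : ZMod (p ^ n)) ^ l * (m : ZMod (p ^ n));
                 0, 1 + (p : ZMod (p ^ n)) ^ i]) :
    ∃ m' : (ZMod (p ^ n))ˣ,
      δ ^ (p ^ (e - l)) =
        !![1, (p : ZMod (p ^ n)) ^ e * (m' : ZMod (p ^ n));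
           0, (1 + (p : ZMod (p ^ n)) ^ i) ^ (p ^ (e - l))] := by
  obtain ⟨t, rfl⟩ := Nat.exists_eq_add_of_le hle.le
  obtain ⟨v, hv⟩ := ZMod.exists_unit_geom_sum_one_add_prime_pow_eq hp hodd n hi t
  refine ⟨m * v, ?_⟩
  rw [hδ, Nat.add_sub_cancel_left, Matrix.one_upper_fin_two_pow, hv, Units.val_mul, pow_add,
    mul_mul_mul_comm]

/-- Let `p` be an odd prime, `n ≥ 1`, `1 ≤ l < e`, `m ∈ (ℤ/pⁿℤ)*`,
`i ≥ 1`, and `δ = [[1, pˡ·m],[0, 1+pⁱ]]`.  Then `δ^(p^(e-l))` has the form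
`[[1, pᵉ·m'],[0, (1+pⁱ)^(p^(e-l))]]` for some unit `m'`. -/
theorem statement8 (p : ℕ) (hp : p.Prime) (hodd : Odd p) (n : ℕ) (hn : 1 ≤ n)
    (l e i : ℕ) (hl : 1 ≤ l) (hle : l < e) (hi : 1 ≤ i)
    (m : (ZMod (p ^ n))ˣ)
    (δ : Matrix (Fin 2) (Fin 2) (ZMod (p ^ n)))
    (hδ : δ = !![1, (p : ZMod (p ^ n)) ^ l * (m : ZMod (p ^ n));
                 0, 1 + (p : ZMod (p ^ n)) ^ i]) :
    ∃ m' : (ZMod (p ^ n))ˣ,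
      δ ^ (p ^ (e - l)) =
        !![1, (p : ZMod (p ^ n)) ^ e * (m' : ZMod (p ^ n));
           0, (1 + (p : ZMod (p ^ n)) ^ i) ^ (p ^ (e - l))] :=
  statement8_general p hp hodd n l e i hle hi m δ hδ
end

section
/- Let G = (ℤ/8ℤ)* act on M = ℤ/8ℤ by multiplication. The map Z : G → M defined by Z(1) = Z(7) = 0 and Z(3) = Z(5) = 4 is a cocycle that satisfies the local conditions (for each g ∈ G there is m_g with Z(g) = g·m_g − m_g) but is not a coboundary. Hence H¹_loc(G, ℤ/8ℤ) ≠ 0. -/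
/-- Let `G = (ℤ/8ℤ)*` act on `ℤ/8ℤ` by multiplication and let
`Z : G → ℤ/8ℤ` send `1, 7 ↦ 0` and `3, 5 ↦ 4`.  Then `Z` is a cocycle satisfying the
local conditions but is not a coboundary; hence `H¹_loc((ℤ/8ℤ)*, ℤ/8ℤ) ≠ 0`. -/
theorem statement9 (Z : (ZMod 8)ˣ → ZMod 8)
    (hZdef : ∀ g : (ZMod 8)ˣ,
      Z g = if (g : ZMod 8) = 3 ∨ (g : ZMod 8) = 5 then 4 else 0) :
    (∀ g h : (ZMod 8)ˣ, Z (g * h) = Z g + (g : ZMod 8) * Z h) ∧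
    (∀ g : (ZMod 8)ˣ, ∃ m : ZMod 8, Z g = (g : ZMod 8) * m - m) ∧
    ¬ (∃ m : ZMod 8, ∀ g : (ZMod 8)ˣ, Z g = (g : ZMod 8) * m - m) := by
  refine ⟨?_, ?_, ?_⟩
  · intro g h
    rw [hZdef, hZdef, hZdef, Units.val_mul]
    revert g h; decide
  · intro g
    rw [hZdef]
    revert g; decide
  · rintro ⟨m, hm⟩
    have h3 := hm ⟨3, 3, by decide, by decide⟩
    have h5 := hm ⟨5, 5, by decide, by decide⟩
    rw [hZdef] at h3 h5
    norm_num at h3 h5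
    revert h3 h5
    clear hm hZdef
    revert m; decide
end

section
/- Let p be a prime, q = p², α a generator of 𝔽_q over 𝔽_p (i.e., {1,α} is an 𝔽_p-basis of 𝔽_q). Let G ≤ GL₂(𝔽_q) be the group of matrices σ(λ₁,λ₂) = [[1, λ₁+λ₂α],[0,1]] with λ₁,λ₂ ∈ 𝔽_p, acting on 𝔽_q². Then the map Z : G → 𝔽_q² sending σ(λ₁,λ₂) to (λ₂, 0) is a group homomorphism (hence a cocycle), satisfies the local conditions, but is not a coboundary; thus H¹_loc(G, 𝔽_q²) ≠ 0. -/
open Matrix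

/-- Let `p` be a prime, `F = 𝔽_q` with `q = p²`, `{1, α}` an
`𝔽_p`-basis of `F`, and let `G ≤ GL₂(F)` consist of the matrices
`σ(λ₁,λ₂) = [[1, λ₁+λ₂α],[0,1]]`, `λ₁,λ₂ ∈ 𝔽_p` (so `G ≅ (𝔽_p)²`).  The map
sending `σ(λ₁,λ₂)` to `(λ₂, 0) ∈ F²` is a cocycle (indeed a homomorphism), satisfies
the local conditions, but is not a coboundary; hence `H¹_loc(G, 𝔽_q²) ≠ 0`. -/
theorem statement10 (p : ℕ) (hp : p.Prime) (F : Type*) [Field F] [Fintype F]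
    [Algebra (ZMod p) F] (hcard : Fintype.card F = p ^ 2)
    (α : F)
    (hbasis : ∀ x : F, ∃! ab : ZMod p × ZMod p,
      x = algebraMap (ZMod p) F ab.1 + algebraMap (ZMod p) F ab.2 * α)
    (σ : ZMod p × ZMod p → Matrix (Fin 2) (Fin 2) F)
    (hσ : ∀ ab : ZMod p × ZMod p,
      σ ab = !![1, algebraMap (ZMod p) F ab.1 + algebraMap (ZMod p) F ab.2 * α; 0, 1])
    (W : ZMod p × ZMod p → Fin 2 → F)
    (hW : ∀ ab : ZMod p × ZMod p, W ab = ![algebraMap (ZMod p) F ab.2, 0]) :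
    (∀ ab cd : ZMod p × ZMod p, W (ab + cd) = W ab + σ ab *ᵥ W cd) ∧
    (∀ ab cd : ZMod p × ZMod p, W (ab + cd) = W ab + W cd) ∧
    (∀ ab : ZMod p × ZMod p, ∃ v : Fin 2 → F, W ab = σ ab *ᵥ v - v) ∧
    ¬ (∃ v : Fin 2 → F, ∀ ab : ZMod p × ZMod p, W ab = σ ab *ᵥ v - v) := by
  have hx0 : ∀ a b : ZMod p, algebraMap (ZMod p) F a + algebraMap (ZMod p) F b * α = 0 → a = 0 ∧ b = 0 := by
    intro a b h
    obtain ⟨ab, hab, huniq⟩ := hbasis 0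
    have h1 := huniq (a, b) h.symm
    have h2 := huniq (0, 0) (by simp)
    have := h1.trans h2.symm
    exact ⟨congrArg Prod.fst this, congrArg Prod.snd this⟩
  have hadd : ∀ ab cd : ZMod p × ZMod p, W (ab + cd) = W ab + W cd := by
    intro ab cd
    rw [hW, hW, hW]
    funext i
    fin_cases i <;> simp [Prod.snd_add, map_add]
  have hmul : ∀ ab cd : ZMod p × ZMod p, σ ab *ᵥ W cd = W cd := by
    intro ab cd
    rw [hσ, hW]
    funext i
    fin_cases i <;> simp [Matrix.mulVec, dotProduct, Fin.sum_univ_two]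
  refine ⟨?_, hadd, ?_, ?_⟩
  · intro ab cd; rw [hmul, hadd]
  · intro ab
    by_cases hb : ab.2 = 0
    · refine ⟨0, ?_⟩
      rw [hW, hb]
      funext i; fin_cases i <;> simp
    · have hx : algebraMap (ZMod p) F ab.1 + algebraMap (ZMod p) F ab.2 * α ≠ 0 := by
        intro h; exact hb (hx0 ab.1 ab.2 h).2
      refine ⟨![0, algebraMap (ZMod p) F ab.2 /
        (algebraMap (ZMod p) F ab.1 + algebraMap (ZMod p) F ab.2 * α)], ?_⟩
      rw [hσ, hW]
      funext i
      fin_cases i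
      · simp [Matrix.mulVec, dotProduct, Fin.sum_univ_two]
        field_simp
      · simp [Matrix.mulVec, dotProduct, Fin.sum_univ_two]
  · rintro ⟨v, hv⟩
    have h10 := hv (1, 0)
    have h01 := hv (0, 1)
    rw [hσ, hW] at h10 h01
    have e10 := congrFun h10 0
    have e01 := congrFun h01 0
    simp [Matrix.mulVec, dotProduct, Fin.sum_univ_two] at e10 e01
    -- e10 : 0 = v 0 + v 1 - v 0 (since x = 1), e01 : 1 = ... α * v 1
    haveI := hp.one_lt
    haveI : Fact p.Prime := ⟨hp⟩
    have hv1 : v 1 = 0 := by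
      linear_combination -e10
    rw [hv1] at e01
    simp only [mul_zero] at e01
    exact one_ne_zero e01
end

section
/- Let G be a group, N ⊴ G a normal subgroup acting trivially on a G-module M. Then the inflation map H¹(G/N, M) → H¹(G,M) restricts to an isomorphism H¹_loc(G/N, M) ≅ H¹_loc(G, M) ∩ ker(res : H¹(G,M) → H¹(N,M)); moreover if in addition every cocycle class in H¹_loc(G,M) restricts trivially to N, inflation gives an isomorphism H¹_loc(G/N,M) ≅ H¹_loc(G,M). -/
/-- Let `N ⊴ G` act trivially on the `G`-module `M`.  Inflation
(precomposition with `G → G/N`) carries local cocycles on `G/N` to local cocycles on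
`G` whose restriction to `N` is a (trivial) coboundary; it is injective on classes;
and every local cocycle on `G` whose restriction to `N` is a coboundary is, up to a
coboundary of `G`, inflated from a local cocycle on `G/N`.  Hence inflation induces
an isomorphism `H¹_loc(G/N, M) ≅ H¹_loc(G,M) ∩ ker(res : H¹(G,M) → H¹(N,M))`; in
particular, if every class of `H¹_loc(G,M)` restricts trivially to `N`, it gives an
isomorphism `H¹_loc(G/N, M) ≅ H¹_loc(G, M)`. -/
theorem statement13 (G : Type*) [Group G] (N : Subgroup G) [N.Normal]
    (M : Type*) [AddCommGroup M] [DistribMulAction G M]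
    (htriv : ∀ n ∈ N, ∀ m : M, n • m = m) :
    -- (i) inflation sends local cocycles on G/N to local cocycles on G
    --     whose restriction to N is a coboundary
    (∀ Z' : G ⧸ N → M,
      (∀ g h : G, Z' ((g * h : G) : G ⧸ N) = Z' (g : G ⧸ N) + g • Z' (h : G ⧸ N)) →
      (∀ g : G, ∃ m : M, Z' (g : G ⧸ N) = g • m - m) →
      ((∀ g h : G, (Z' ∘ (QuotientGroup.mk : G → G ⧸ N)) (g * h)
          = (Z' ∘ QuotientGroup.mk) g + g • (Z' ∘ QuotientGroup.mk) h) ∧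
        (∀ g : G, ∃ m : M, (Z' ∘ QuotientGroup.mk) g = g • m - m) ∧
        (∃ m : M, ∀ n ∈ N, (Z' ∘ QuotientGroup.mk) n = n • m - m))) ∧
    -- (ii) inflation is injective on cohomology classes
    (∀ Z' : G ⧸ N → M,
      (∀ g h : G, Z' ((g * h : G) : G ⧸ N) = Z' (g : G ⧸ N) + g • Z' (h : G ⧸ N)) →
      -- if the inflation of Z' is a coboundary on G ...
      (∃ m : M, ∀ g : G, (Z' ∘ QuotientGroup.mk) g = g • m - m) →
      -- ... then Z' is a coboundary on G/N
      (∃ m : M, ∀ x : G ⧸ N, ∀ g : G, (g : G ⧸ N) = x → Z' x = g • m - m)) ∧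
    -- (iii) surjectivity: every local cocycle on G restricting to a coboundary on N
    --       is cohomologous to an inflated local cocycle on G/N
    (∀ Z : G → M,
      (∀ g h : G, Z (g * h) = Z g + g • Z h) →
      (∀ g : G, ∃ m : M, Z g = g • m - m) →
      (∃ m : M, ∀ n ∈ N, Z n = n • m - m) →
      ∃ (Z' : G ⧸ N → M) (m : M),
        (∀ g h : G, Z' ((g * h : G) : G ⧸ N) = Z' (g : G ⧸ N) + g • Z' (h : G ⧸ N)) ∧
        (∀ g : G, ∃ m' : M, Z' (g : G ⧸ N) = g • m' - m') ∧
        (∀ g : G, Z g = Z' (g : G ⧸ N) + (g • m - m))) := by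
  refine ⟨?_, ?_, ?_⟩
  · intro Z' hc hl
    have h1 : Z' ((1 : G) : G ⧸ N) = 0 := by
      have h := hc 1 1
      simp only [one_mul, one_smul] at h
      exact (left_eq_add.mp h)
    refine ⟨fun g h => hc g h, fun g => hl g, 0, fun n hn => ?_⟩
    have : ((n : G) : G ⧸ N) = ((1 : G) : G ⧸ N) := by
      simpa [QuotientGroup.eq_one_iff] using hn
    simp only [Function.comp_apply, this, h1, smul_zero, sub_self]
  · intro Z' hc ⟨m, hm⟩
    exact ⟨m, fun x g hg => hg ▸ hm g⟩
  · intro Z hc hl ⟨m, hm⟩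
    have hZN : ∀ n ∈ N, Z n = 0 := fun n hn => by
      rw [hm n hn, htriv n hn m, sub_self]
    have hconst : ∀ g : G, ∀ n ∈ N, Z (g * n) = Z g := fun g n hn => by
      rw [hc g n, hZN n hn, smul_zero, add_zero]
    have key : ∀ g : G, Z (((g : G ⧸ N) : G ⧸ N).out) = Z g := by
      intro g
      have hout : ((Quotient.out ((g : G ⧸ N)) : G) : G ⧸ N) = (g : G ⧸ N) :=
        Quotient.out_eq _
      have hmem : g⁻¹ * (Quotient.out ((g : G ⧸ N))) ∈ N := by
        rw [← QuotientGroup.eq]; exact hout.symm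
      have : Quotient.out ((g : G ⧸ N)) = g * (g⁻¹ * Quotient.out ((g : G ⧸ N))) := by
        group
      rw [this, hconst g _ hmem]
    refine ⟨fun x => Z x.out, 0, ?_, ?_, ?_⟩
    · intro g h
      have h1 := key (g * h)
      have h2 := key g
      have h3 := key h
      simp only [h1, h2, h3]
      exact hc g h
    · intro g
      obtain ⟨m', hm'⟩ := hl g
      exact ⟨m', by show Z (Quotient.out ((g : G ⧸ N))) = g • m' - m'; rw [key g]; exact hm'⟩
    · intro g
      show Z g = Z (Quotient.out ((g : G ⧸ N))) + (g • (0:M) - 0)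
      rw [key g]; simp
end

section
/- Let p be a prime, n ≥ 1, and let G₁₆ ≤ GL₂(ℤ/16ℤ) be the subgroup generated by [[3,8],[0,1]] and [[15,0],[0,1]]. Then the image G₈ of G₁₆ under the reduction homomorphism GL₂(ℤ/16ℤ) → GL₂(ℤ/8ℤ) equals the group of matrices [[a,0],[0,1]] with a ∈ (ℤ/8ℤ)*. -/
open Matrix

def phi : (ZMod 8)ˣ →* GL (Fin 2) (ZMod 8) where
  toFun a := ⟨!![(a : ZMod 8), 0; 0, 1], !![((a⁻¹ : (ZMod 8)ˣ) : ZMod 8), 0; 0, 1],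
    by simp [Matrix.mul_fin_two, ← Matrix.one_fin_two, a.mul_inv],
    by simp [Matrix.mul_fin_two, ← Matrix.one_fin_two, a.inv_mul]⟩
  map_one' := by ext i j; simp [Matrix.one_fin_two]
  map_mul' a b := by
    ext i j
    simp [Matrix.mul_fin_two]

def u3 : (ZMod 8)ˣ := ZMod.unitOfCoprime 3 (by norm_num)
def u7 : (ZMod 8)ˣ := ZMod.unitOfCoprime 7 (by norm_num)

lemma closure_u : Subgroup.closure ({u3, u7} : Set (ZMod 8)ˣ) = ⊤ := by
  rw [eq_top_iff]
  intro x hm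
  clear hm
  have h3 : u3 ∈ Subgroup.closure ({u3, u7} : Set (ZMod 8)ˣ) :=
    Subgroup.subset_closure (Set.mem_insert _ _)
  have h7 : u7 ∈ Subgroup.closure ({u3, u7} : Set (ZMod 8)ˣ) :=
    Subgroup.subset_closure (Set.mem_insert_of_mem _ rfl)
  have hx : x = u3 * u3 ∨ x = u3 ∨ x = u3 * u7 ∨ x = u7 := by revert x; decide
  rcases hx with h | h | h | h <;> subst h
  · exact mul_mem h3 h3
  · exact h3
  · exact mul_mem h3 h7
  · exact h7

/-- Let `G₁₆ ≤ GL₂(ℤ/16ℤ)` be generated by `[[3,8],[0,1]]` and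
`[[15,0],[0,1]]`.  Its image `G₈` under the reduction `GL₂(ℤ/16ℤ) → GL₂(ℤ/8ℤ)`
is exactly the group of matrices `[[a,0],[0,1]]` with `a ∈ (ℤ/8ℤ)*`. -/
theorem statement14 (A B : GL (Fin 2) (ZMod 16))
    (hA : (A : Matrix (Fin 2) (Fin 2) (ZMod 16)) = !![3, 8; 0, 1])
    (hB : (B : Matrix (Fin 2) (Fin 2) (ZMod 16)) = !![15, 0; 0, 1]) :
    ((Subgroup.closure {A, B}).map
        (Matrix.GeneralLinearGroup.map (ZMod.castHom (show (8 : ℕ) ∣ 16 by norm_num) (ZMod 8))) : Set (GL (Fin 2) (ZMod 8)))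
      = {g : GL (Fin 2) (ZMod 8) | ∃ a : (ZMod 8)ˣ,
          (g : Matrix (Fin 2) (Fin 2) (ZMod 8)) = !![(a : ZMod 8), 0; 0, 1]} := by
  set f : GL (Fin 2) (ZMod 16) →* GL (Fin 2) (ZMod 8) := Matrix.GeneralLinearGroup.map (ZMod.castHom (show (8 : ℕ) ∣ 16 by norm_num) (ZMod 8))
  have hfA : f A = phi u3 := by
    ext i j
    have : ((f A : GL (Fin 2) (ZMod 8)) : Matrix (Fin 2) (Fin 2) (ZMod 8)) =
        (A : Matrix (Fin 2) (Fin 2) (ZMod 16)).map (ZMod.castHom (show (8 : ℕ) ∣ 16 by norm_num) (ZMod 8)) := rfl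
    rw [this, hA]
    fin_cases i <;> fin_cases j <;> simp [phi, u3] <;> decide
  have hfB : f B = phi u7 := by
    ext i j
    have : ((f B : GL (Fin 2) (ZMod 8)) : Matrix (Fin 2) (Fin 2) (ZMod 8)) =
        (B : Matrix (Fin 2) (Fin 2) (ZMod 16)).map (ZMod.castHom (show (8 : ℕ) ∣ 16 by norm_num) (ZMod 8)) := rfl
    rw [this, hB]
    fin_cases i <;> fin_cases j <;> simp [phi, u7] <;> decide
  have key : (Subgroup.closure {A, B}).map f = phi.range := by
    rw [MonoidHom.map_closure]
    have himg : f '' {A, B} = phi '' {u3, u7} := by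
      rw [Set.image_insert_eq, Set.image_singleton, Set.image_insert_eq,
        Set.image_singleton, hfA, hfB]
    rw [himg, ← MonoidHom.map_closure, closure_u, ← MonoidHom.range_eq_map]
  rw [key]
  ext g
  constructor
  · rintro ⟨a, rfl⟩
    exact ⟨a, rfl⟩
  · rintro ⟨a, ha⟩
    exact ⟨a, Units.ext ha.symm⟩
end

section
/- Let p be an odd prime, n ≥ 1, and G ≤ GL₂(ℤ/pⁿℤ) a group all of whose elements fix (1,0) (i.e., of the form [[1,f],[0,c]] with c a unit). Suppose G is a p-group and is not cyclic. Let i be the largest integer such that every element of G has (2,2)-entry ≡ 1 mod p^i, and suppose [[1,p^e],[0,1]] generates the subgroup of upper unitriangular matrices of G. Then there exists b ∈ ℤ/pⁿℤ such that G is generated by δ = [[1,b],[0,1+p^i]] and σ = [[1,p^e],[0,1]]; furthermore, if p^e divides b, then G is also generated by [[1,0],[0,1+p^i]] and σ. -/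
/-!
For an odd prime `p`, `i ≥ 1` and `p ∤ a`, the unit `1 + pⁱa` of `ZMod (pⁿ)` has order `pⁿ⁻ⁱ`,
which is also the number of residues `≡ 1 mod pⁱ`; hence its powers are exactly these residues.
Applied to the `(2,2)`-entry of an element of `G` witnessing the maximality of `i`, this gives a
power `δ` of it with `(2,2)`-entry `1 + pⁱ`; applied to `1 + pⁱ` itself, it shows that every
element `g` of `G` has the `(2,2)`-entry of some `δᵏ`, so that `δ⁻ᵏg` lies in `⟨σ⟩`. If `pᵉ ∣ b`,
multiplying `δ` by a power of `σ` clears its corner entry without changing the group generated.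
-/

namespace ZMod

lemma exists_lt_prime_pow_mul_eq {p k i : ℕ} (hp : p ≠ 0) (s : ZMod (p ^ (k + i))) :
    ∃ r < p ^ k, (p : ZMod (p ^ (k + i))) ^ i * s = p ^ i * r := by
  have : NeZero (p ^ (k + i)) := ⟨pow_ne_zero _ hp⟩
  refine ⟨s.val % p ^ k, Nat.mod_lt _ (by positivity), ?_⟩
  conv_lhs => rw [← natCast_zmod_val s, ← Nat.mod_add_div s.val (p ^ k)]
  have : ((p ^ (k + i) : ℕ) : ZMod (p ^ (k + i))) = 0 := natCast_self _
  push_cast at this ⊢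
  linear_combination (s.val / p ^ k : ℕ) * this

theorem exists_pow_one_add_prime_pow_mul_eq {p : ℕ} (hp : p.Prime) (hp2 : p ≠ 2) {n i : ℕ}
    (hi : i ≠ 0) {a : ℤ} (ha : ¬ (p : ℤ) ∣ a) (s : ZMod (p ^ n)) :
    ∃ m : ℕ, (1 + p ^ i * a : ZMod (p ^ n)) ^ m = 1 + p ^ i * s := by
  rcases le_or_gt n i with hni | hin
  · have hpi : (p : ZMod (p ^ n)) ^ i = 0 := by
      exact_mod_cast (natCast_eq_zero_iff _ _).2 (pow_dvd_pow p hni)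
    exact ⟨0, by simp [hpi]⟩
  obtain ⟨k, rfl⟩ : ∃ k, n = k + i := ⟨n - i, by omega⟩
  set x : ZMod (p ^ (k + i)) := 1 + p ^ i * a
  have hx : orderOf x = p ^ k := by
    refine orderOf_one_add_mul_prime_pow hp i hi ?_ a ha k
    have : 3 ≤ p := by have := hp.two_le; omega
    have : 1 ≤ i := Nat.one_le_iff_ne_zero.2 hi
    nlinarith
  let residues := (Finset.range (p ^ k)).image fun r : ℕ => (1 + p ^ i * r : ZMod (p ^ (k + i)))
  let powers := (Finset.range (p ^ k)).image (x ^ ·)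
  have hsub : powers ⊆ residues := by
    simp only [powers, residues, Finset.subset_iff, Finset.mem_image, Finset.mem_range]
    rintro _ ⟨j, -, rfl⟩
    obtain ⟨c, hc⟩ : (p : ZMod (p ^ (k + i))) ^ i ∣ x ^ j - 1 :=
      (dvd_mul_right _ _).trans (by simpa [x] using sub_dvd_pow_sub_pow x 1 j)
    obtain ⟨r, hr, hrc⟩ := exists_lt_prime_pow_mul_eq hp.ne_zero c
    exact ⟨r, hr, by rw [← hrc, ← hc, add_sub_cancel]⟩
  have hcard : residues.card ≤ powers.card := by
    rw [Finset.card_image_of_injOn (pow_injOn_Iio_orderOf.mono (by simp [hx])),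
      Finset.card_range]
    exact Finset.card_image_le.trans (Finset.card_range _).le
  obtain ⟨r, hr, hrs⟩ := exists_lt_prime_pow_mul_eq hp.ne_zero s
  have : 1 + (p : ZMod (p ^ (k + i))) ^ i * s ∈ powers := by
    rw [Finset.eq_of_subset_of_card_le hsub hcard, hrs]
    exact Finset.mem_image_of_mem _ (Finset.mem_range.2 hr)
  obtain ⟨m, -, hm⟩ := Finset.mem_image.1 this
  exact ⟨m, hm⟩

end ZMod

section GL2

variable {R : Type*} [CommRing R]

lemma Matrix.mul_apply_one_one_of_apply_one_zero {A : Matrix (Fin 2) (Fin 2) R} (hA : A 1 0 = 0)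
    (B : Matrix (Fin 2) (Fin 2) R) : (A * B) 1 1 = A 1 1 * B 1 1 := by
  simp [Matrix.mul_apply, Fin.sum_univ_two, hA]

lemma Matrix.pow_apply_one_one_of_apply_one_zero {A : Matrix (Fin 2) (Fin 2) R} (hA : A 1 0 = 0)
    (k : ℕ) : (A ^ k) 1 1 = A 1 1 ^ k := by
  induction k with
  | zero => simp
  | succ k ih => rw [pow_succ', Matrix.mul_apply_one_one_of_apply_one_zero hA, ih, pow_succ']

lemma eq_closure_pair_of_forall_exists_pow_apply_one_one {G : Subgroup (GL (Fin 2) R)}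
    (hG : ∀ g ∈ G, (g : Matrix (Fin 2) (Fin 2) R) 1 0 = 0) {δ σ : GL (Fin 2) R}
    (hδ : δ ∈ G) (hσ : σ ∈ G)
    (hker : ∀ g ∈ G, (g : Matrix (Fin 2) (Fin 2) R) 1 1 = 1 → g ∈ Subgroup.zpowers σ)
    (hpow : ∀ g ∈ G, ∃ k : ℕ,
      (δ : Matrix (Fin 2) (Fin 2) R) 1 1 ^ k = (g : Matrix (Fin 2) (Fin 2) R) 1 1) :
    G = Subgroup.closure {δ, σ} := by
  refine le_antisymm (fun g hg ↦ ?_) ((Subgroup.closure_le G).2 (Set.insert_subset hδ (by simpa)))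
  obtain ⟨k, hk⟩ := hpow g hg
  have hδk : ((δ ^ k : GL (Fin 2) R) : Matrix (Fin 2) (Fin 2) R) 1 1 =
      (g : Matrix (Fin 2) (Fin 2) R) 1 1 := by
    rw [Units.val_pow_eq_pow_val, Matrix.pow_apply_one_one_of_apply_one_zero (hG δ hδ), hk]
  have hxG : (δ ^ k)⁻¹ ∈ G := inv_mem (pow_mem hδ k)
  have hx : ((((δ ^ k)⁻¹ : GL (Fin 2) R)) : Matrix (Fin 2) (Fin 2) R) 1 1 *
      (g : Matrix (Fin 2) (Fin 2) R) 1 1 = 1 := by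
    rw [← hδk, ← Matrix.mul_apply_one_one_of_apply_one_zero (hG _ hxG), ← Units.val_mul,
      inv_mul_cancel, Units.val_one, Matrix.one_apply_eq]
  have hkerg : (δ ^ k)⁻¹ * g ∈ Subgroup.zpowers σ := by
    refine hker _ (mul_mem hxG hg) ?_
    rw [Units.val_mul, Matrix.mul_apply_one_one_of_apply_one_zero (hG _ hxG), hx]
  have hσcl : Subgroup.zpowers σ ≤ Subgroup.closure {δ, σ} :=
    Subgroup.zpowers_le.2 (Subgroup.subset_closure (by simp))
  rw [← mul_inv_cancel_left (δ ^ k) g]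
  exact mul_mem (pow_mem (Subgroup.subset_closure (by simp)) k) (hσcl hkerg)

end GL2

lemma exists_mem_apply_one_one_eq_one_add_prime_pow {p n i : ℕ} (hp : p.Prime) (hp2 : p ≠ 2)
    (hi : i ≠ 0) {G : Subgroup (GL (Fin 2) (ZMod (p ^ n)))}
    (hG : ∀ g ∈ G, (g : Matrix (Fin 2) (Fin 2) (ZMod (p ^ n))) 1 0 = 0)
    (hiall : ∀ g ∈ G, ∃ t : ZMod (p ^ n),
      (g : Matrix (Fin 2) (Fin 2) (ZMod (p ^ n))) 1 1 = 1 + (p : ZMod (p ^ n)) ^ i * t)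
    (himax : ¬ ∀ g ∈ G, ∃ t : ZMod (p ^ n),
      (g : Matrix (Fin 2) (Fin 2) (ZMod (p ^ n))) 1 1 = 1 + (p : ZMod (p ^ n)) ^ (i + 1) * t) :
    ∃ δ ∈ G, (δ : Matrix (Fin 2) (Fin 2) (ZMod (p ^ n))) 1 1 = 1 + p ^ i := by
  push Not at himax
  obtain ⟨g, hg, hgi⟩ := himax
  obtain ⟨t, ht⟩ := hiall g hg
  have hpt : ¬ (p : ℤ) ∣ (t.cast : ℤ) := by
    rintro ⟨w, hw⟩
    apply hgi w
    rw [ht, ← ZMod.intCast_zmod_cast t, hw]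
    push_cast
    ring
  obtain ⟨m, hm⟩ := ZMod.exists_pow_one_add_prime_pow_mul_eq hp hp2 hi hpt 1
  refine ⟨g ^ m, pow_mem hg m, ?_⟩
  rw [Units.val_pow_eq_pow_val, Matrix.pow_apply_one_one_of_apply_one_zero (hG g hg), ht,
    ← ZMod.intCast_zmod_cast t, hm, mul_one]

open Matrix.GeneralLinearGroup in
theorem statement15_general (p : ℕ) (hp : p.Prime) (hodd : Odd p) (n : ℕ)
    (G : Subgroup (GL (Fin 2) (ZMod (p ^ n))))
    (hform : ∀ g ∈ G, ∃ f c : ZMod (p ^ n),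
      (g : Matrix (Fin 2) (Fin 2) (ZMod (p ^ n))) = !![1, f; 0, c])
    (i : ℕ) (hi1 : 1 ≤ i)
    (hiall : ∀ g ∈ G, ∃ t : ZMod (p ^ n),
      (g : Matrix (Fin 2) (Fin 2) (ZMod (p ^ n))) 1 1 = 1 + (p : ZMod (p ^ n)) ^ i * t)
    (himax : ¬ ∀ g ∈ G, ∃ t : ZMod (p ^ n),
      (g : Matrix (Fin 2) (Fin 2) (ZMod (p ^ n))) 1 1 = 1 + (p : ZMod (p ^ n)) ^ (i + 1) * t)
    (e : ℕ) (σ : GL (Fin 2) (ZMod (p ^ n))) (hσG : σ ∈ G)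
    (hσ : (σ : Matrix (Fin 2) (Fin 2) (ZMod (p ^ n))) = !![1, (p : ZMod (p ^ n)) ^ e; 0, 1])
    (hσgen : ∀ g ∈ G, (g : Matrix (Fin 2) (Fin 2) (ZMod (p ^ n))) 1 1 = 1 →
      g ∈ Subgroup.zpowers σ) :
    ∃ (b : ZMod (p ^ n)) (δ : GL (Fin 2) (ZMod (p ^ n))),
      (δ : Matrix (Fin 2) (Fin 2) (ZMod (p ^ n)))
          = !![1, b; 0, 1 + (p : ZMod (p ^ n)) ^ i] ∧
      G = Subgroup.closure {δ, σ} ∧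
      ((∃ c : ZMod (p ^ n), b = (p : ZMod (p ^ n)) ^ e * c) →
        ∃ δ' : GL (Fin 2) (ZMod (p ^ n)),
          (δ' : Matrix (Fin 2) (Fin 2) (ZMod (p ^ n)))
              = !![1, 0; 0, 1 + (p : ZMod (p ^ n)) ^ i] ∧
          G = Subgroup.closure {δ', σ}) := by
  have hG : ∀ g ∈ G, (g : Matrix (Fin 2) (Fin 2) (ZMod (p ^ n))) 1 0 = 0 := fun g hg ↦ by
    obtain ⟨f, c, h⟩ := hform g hg
    simp [h]
  have hp2 : p ≠ 2 := by rintro rfl; exact absurd hodd (by decide)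
  have hi : i ≠ 0 := Nat.one_le_iff_ne_zero.1 hi1
  have hgen : ∀ δ ∈ G, (δ : Matrix (Fin 2) (Fin 2) (ZMod (p ^ n))) 1 1 = 1 + p ^ i →
      G = Subgroup.closure {δ, σ} := fun δ hδ hδ11 ↦ by
    refine eq_closure_pair_of_forall_exists_pow_apply_one_one hG hδ hσG hσgen fun g hg ↦ ?_
    obtain ⟨t, ht⟩ := hiall g hg
    obtain ⟨k, hk⟩ := ZMod.exists_pow_one_add_prime_pow_mul_eq (a := 1) hp hp2 hi
      (by exact_mod_cast hp.not_dvd_one) t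
    exact ⟨k, by rw [hδ11, ht, ← hk, Int.cast_one, mul_one]⟩
  obtain ⟨δ, hδG, hδ11⟩ := exists_mem_apply_one_one_eq_one_add_prime_pow hp hp2 hi hG hiall himax
  obtain ⟨b, c, hδ⟩ := hform δ hδG
  obtain rfl : c = 1 + p ^ i := by simpa [hδ] using hδ11
  refine ⟨b, δ, hδ, hgen δ hδG hδ11, ?_⟩
  rintro ⟨c₀, rfl⟩
  have hτG : upperRightHom (-(p ^ e * c₀)) ∈ G := by
    have hσ' : σ = upperRightHom ((p : ZMod (p ^ n)) ^ e) := Units.ext (by simpa using hσ)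
    rw [AddChar.map_neg_eq_inv, ← ZMod.intCast_zmod_cast c₀, mul_comm, ← zsmul_eq_mul,
      AddChar.map_zsmul_eq_zpow, ← hσ']
    exact inv_mem (zpow_mem hσG _)
  refine ⟨δ * upperRightHom (-(p ^ e * c₀)), ?_, hgen _ (mul_mem hδG hτG) ?_⟩
  · simp [hδ]
  · simp [hδ, Matrix.mul_apply, Fin.sum_univ_two]

/-- Lemma 2.2 of the paper: let `p` be an odd prime, `n ≥ 1`, and
`G ≤ GL₂(ℤ/pⁿℤ)` a non-cyclic `p`-group all of whose elements fix `(1,0)` (so they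
are of the form `[[1,f],[0,c]]`).  Let `i` be the largest integer such that every
element of `G` has `(2,2)`-entry `≡ 1 mod pⁱ`, and assume `σ = [[1,pᵉ],[0,1]]`
generates the subgroup of upper unitriangular matrices of `G`.  Then there is
`b ∈ ℤ/pⁿℤ` such that `G = ⟨δ, σ⟩` with `δ = [[1,b],[0,1+pⁱ]]`; moreover if `pᵉ ∣ b`
then also `G = ⟨[[1,0],[0,1+pⁱ]], σ⟩`. -/
theorem statement15 (p : ℕ) (hp : p.Prime) (hodd : Odd p) (n : ℕ) (hn : 1 ≤ n)
    (G : Subgroup (GL (Fin 2) (ZMod (p ^ n))))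
    (hpG : IsPGroup p G) (hnotcyc : ¬ IsCyclic G)
    (hform : ∀ g ∈ G, ∃ f c : ZMod (p ^ n),
      (g : Matrix (Fin 2) (Fin 2) (ZMod (p ^ n))) = !![1, f; 0, c])
    (i : ℕ) (hi1 : 1 ≤ i)
    (hiall : ∀ g ∈ G, ∃ t : ZMod (p ^ n),
      (g : Matrix (Fin 2) (Fin 2) (ZMod (p ^ n))) 1 1 = 1 + (p : ZMod (p ^ n)) ^ i * t)
    (himax : ¬ ∀ g ∈ G, ∃ t : ZMod (p ^ n),
      (g : Matrix (Fin 2) (Fin 2) (ZMod (p ^ n))) 1 1 = 1 + (p : ZMod (p ^ n)) ^ (i + 1) * t)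
    (e : ℕ) (σ : GL (Fin 2) (ZMod (p ^ n))) (hσG : σ ∈ G)
    (hσ : (σ : Matrix (Fin 2) (Fin 2) (ZMod (p ^ n))) = !![1, (p : ZMod (p ^ n)) ^ e; 0, 1])
    (hσgen : ∀ g ∈ G, (g : Matrix (Fin 2) (Fin 2) (ZMod (p ^ n))) 1 1 = 1 →
      g ∈ Subgroup.zpowers σ) :
    ∃ (b : ZMod (p ^ n)) (δ : GL (Fin 2) (ZMod (p ^ n))),
      (δ : Matrix (Fin 2) (Fin 2) (ZMod (p ^ n)))
          = !![1, b; 0, 1 + (p : ZMod (p ^ n)) ^ i] ∧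
      G = Subgroup.closure {δ, σ} ∧
      ((∃ c : ZMod (p ^ n), b = (p : ZMod (p ^ n)) ^ e * c) →
        ∃ δ' : GL (Fin 2) (ZMod (p ^ n)),
          (δ' : Matrix (Fin 2) (Fin 2) (ZMod (p ^ n)))
              = !![1, 0; 0, 1 + (p : ZMod (p ^ n)) ^ i] ∧
          G = Subgroup.closure {δ', σ}) :=
  statement15_general p hp hodd n G hform i hi1 hiall himax e σ hσG hσ hσgen
end

section
/- Let p be an odd prime, n ≥ 1, and let G ≤ GL₂(ℤ/pⁿℤ) be generated by the diagonal matrix δ = [[1,0],[0,1+p^i]] and σ = [[1,p^e],[0,1]], acting on V = (ℤ/pⁿℤ)². If e ≥ i, then any cocycle Z : G → V satisfying the local conditions and with Z_δ = 0 and Z_σ ∈ (σ−1)V is identically zero. -/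
open Matrix

/-- Let `p` be an odd prime, `n ≥ 1`, and let `G ≤ GL₂(ℤ/pⁿℤ)` be
generated by `δ = [[1,0],[0,1+pⁱ]]` and `σ = [[1,pᵉ],[0,1]]`, acting on
`V = (ℤ/pⁿℤ)²`.  If `e ≥ i`, then any cocycle `Z : G → V` satisfying the local
conditions and with `Z_δ = 0` and `Z_σ ∈ (σ−1)V` is identically zero. -/
theorem statement16 (p : ℕ) (hp : p.Prime) (hodd : Odd p) (n : ℕ) (hn : 1 ≤ n)
    (i e : ℕ) (hi : 1 ≤ i) (he : 1 ≤ e) (hei : e ≥ i)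
    (d s : GL (Fin 2) (ZMod (p ^ n)))
    (hd : (d : Matrix (Fin 2) (Fin 2) (ZMod (p ^ n))) = !![1, 0; 0, 1 + (p : ZMod (p ^ n)) ^ i])
    (hs : (s : Matrix (Fin 2) (Fin 2) (ZMod (p ^ n))) = !![1, (p : ZMod (p ^ n)) ^ e; 0, 1])
    (G : Subgroup (GL (Fin 2) (ZMod (p ^ n))))
    (hG : G = Subgroup.closure {d, s}) (hdG : d ∈ G) (hsG : s ∈ G)
    (Z : G → Fin 2 → ZMod (p ^ n))
    (hZ : ∀ g h : G, Z (g * h) = Z g +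
      ((g : GL (Fin 2) (ZMod (p ^ n))) : Matrix (Fin 2) (Fin 2) (ZMod (p ^ n))) *ᵥ Z h)
    (hloc : ∀ g : G, ∃ v : Fin 2 → ZMod (p ^ n),
      Z g = ((g : GL (Fin 2) (ZMod (p ^ n))) : Matrix (Fin 2) (Fin 2) (ZMod (p ^ n))) *ᵥ v - v)
    (hZd : Z ⟨d, hdG⟩ = 0)
    (hZs : ∃ v : Fin 2 → ZMod (p ^ n),
      Z ⟨s, hsG⟩ = (s : Matrix (Fin 2) (Fin 2) (ZMod (p ^ n))) *ᵥ v - v) :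
    ∀ g : G, Z g = 0 := by

  -- Show Z at s vanishes.
  have hps : Z ⟨s, hsG⟩ = 0 := by
    obtain ⟨v, hv⟩ := hZs
    obtain ⟨w, hw⟩ := hloc (⟨d, hdG⟩ * ⟨s, hsG⟩)
    have hzds : Z (⟨d, hdG⟩ * ⟨s, hsG⟩)
        = (d : Matrix (Fin 2) (Fin 2) (ZMod (p ^ n))) *ᵥ Z ⟨s, hsG⟩ := by
      rw [hZ, hZd]; simp
    have hds : (((⟨d, hdG⟩ * ⟨s, hsG⟩ : G) : GL (Fin 2) (ZMod (p ^ n)))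
        : Matrix (Fin 2) (Fin 2) (ZMod (p ^ n)))
        = !![1, (p : ZMod (p ^ n)) ^ e; 0, 1 + (p : ZMod (p ^ n)) ^ i] := by
      have : (((⟨d, hdG⟩ * ⟨s, hsG⟩ : G) : GL (Fin 2) (ZMod (p ^ n)))
          : Matrix (Fin 2) (Fin 2) (ZMod (p ^ n)))
          = (d : Matrix (Fin 2) (Fin 2) (ZMod (p ^ n)))
            * (s : Matrix (Fin 2) (Fin 2) (ZMod (p ^ n))) := rfl
      rw [this, hd, hs, Matrix.mul_fin_two]
      congr 1 <;> ring
    -- component equations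
    have h1 : Z ⟨s, hsG⟩ 1 = 0 := by
      have := congrFun hv 1
      simp [hs, Matrix.mulVec, dotProduct, Fin.sum_univ_two] at this
      simpa using this
    have hE := hw.symm.trans hzds
    rw [hds] at hE
    have hE1 : (p : ZMod (p ^ n)) ^ i * w 1 = (1 + (p : ZMod (p ^ n)) ^ i) * Z ⟨s, hsG⟩ 1 := by
      have := congrFun hE 1
      simp [hd, Matrix.mulVec, dotProduct, Fin.sum_univ_two] at this
      linear_combination this
    have hwi : (p : ZMod (p ^ n)) ^ i * w 1 = 0 := by rw [hE1, h1, mul_zero]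
    have hE0 : Z ⟨s, hsG⟩ 0 = (p : ZMod (p ^ n)) ^ e * w 1 := by
      have := congrFun hE 0
      simp [hd, Matrix.mulVec, dotProduct, Fin.sum_univ_two] at this
      linear_combination -this
    have h0 : Z ⟨s, hsG⟩ 0 = 0 := by
      rw [hE0]
      have : (p : ZMod (p ^ n)) ^ e = (p : ZMod (p ^ n)) ^ (e - i) * (p : ZMod (p ^ n)) ^ i := by
        rw [← pow_add]; congr 1; omega
      rw [this, mul_assoc, hwi, mul_zero]
    funext j
    fin_cases j
    · exact h0
    · exact h1
  -- Z vanishes at 1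
  have hone : Z 1 = 0 := by
    have h2 : Z 1 = Z 1 + Z 1 := by
      calc Z 1 = Z (1 * 1) := by rw [mul_one]
      _ = Z 1 + Z 1 := by rw [hZ]; simp
    have h3 : Z 1 + 0 = Z 1 + Z 1 := by rw [add_zero]; exact h2
    exact (add_left_cancel h3).symm
  -- general element
  intro g
  obtain ⟨x, hx⟩ := g
  have hx' : x ∈ Subgroup.closure {d, s} := hG ▸ hx
  revert hx
  refine Subgroup.closure_induction
    (p := fun y hy => ∀ hyG : y ∈ G, Z ⟨y, hyG⟩ = 0) ?_ ?_ ?_ ?_ hx'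
  · rintro y (rfl | rfl) hyG
    · exact hZd
    · exact hps
  · intro h1G; exact hone
  · intro a b ha hb iha ihb habG
    have haG : a ∈ G := hG ▸ ha
    have hbG : b ∈ G := hG ▸ hb
    have : (⟨a * b, habG⟩ : G) = ⟨a, haG⟩ * ⟨b, hbG⟩ := rfl
    rw [this, hZ, iha haG, ihb hbG]
    simp
  · intro a ha iha haiG
    have haG : a ∈ G := hG ▸ ha
    have hmul : (⟨a, haG⟩ : G) * ⟨a⁻¹, haiG⟩ = 1 := by
      ext : 1; exact mul_inv_cancel a
    have h0 : Z (⟨a, haG⟩ * ⟨a⁻¹, haiG⟩) = 0 := by rw [hmul]; exact hone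
    rw [hZ, iha haG, zero_add] at h0
    have := congrArg (fun v => ((a⁻¹ : GL (Fin 2) (ZMod (p ^ n)))
        : Matrix (Fin 2) (Fin 2) (ZMod (p ^ n))) *ᵥ v) h0
    simp only [Matrix.mulVec_mulVec] at this
    have hinv : ((a⁻¹ : GL (Fin 2) (ZMod (p ^ n))) : Matrix (Fin 2) (Fin 2) (ZMod (p ^ n)))
        * ((a : GL (Fin 2) (ZMod (p ^ n))) : Matrix (Fin 2) (Fin 2) (ZMod (p ^ n))) = 1 := by
      rw [← Units.val_mul, inv_mul_cancel, Units.val_one]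
    rw [hinv] at this
    simpa using this
end
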